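/- arXiv:2507.20652 — 4 statements merged into one kernel-verified Lean document; each statement's English description precedes it below -/
import Mathlib

section
/- Let B₁ ∈ ℝ^{n×n} with σ_min(B₀) > ‖B₁‖. Then for every b₀, b₁ ∈ ℝⁿ, the generalized absolute value equation B₀x + b₀ + |B₁x + b₁| = 0 has a unique solution x ∈ ℝⁿ. -/
/-! Since `σ_min(B₀) > 0`, the map `x ↦ B₀x` is antilipschitz with constant `σ_min(B₀)⁻¹`, hence
bijective, while `x ↦ -(b₀ + |B₁x + b₁|)` is `‖B₁‖`-Lipschitz because `|·|` is componentwise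
1-Lipschitz. The equation then says that `x` is a fixed point of
`x ↦ B₀⁻¹(-(b₀ + |B₁x + b₁|))`, a contraction with ratio `‖B₁‖ / σ_min(B₀) < 1`, and Banach's
fixed point theorem gives existence and uniqueness. -/

noncomputable def mApp {n : ℕ} (B : Matrix (Fin n) (Fin n) ℝ) (x : EuclideanSpace ℝ (Fin n)) :
    EuclideanSpace ℝ (Fin n) := Matrix.toEuclideanCLM (𝕜 := ℝ) B x

noncomputable def specNorm {n : ℕ} (B : Matrix (Fin n) (Fin n) ℝ) : ℝ :=
  ‖Matrix.toEuclideanCLM (𝕜 := ℝ) B‖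

noncomputable def sigmaMin {n : ℕ} (B : Matrix (Fin n) (Fin n) ℝ) : ℝ :=
  sInf {r : ℝ | ∃ v : EuclideanSpace ℝ (Fin n), ‖v‖ = 1 ∧ r = ‖mApp B v‖}

def vabs {n : ℕ} (v : EuclideanSpace ℝ (Fin n)) : EuclideanSpace ℝ (Fin n) := WithLp.toLp 2 (fun i => |v i|)

open scoped NNReal

theorem existsUnique_eq_of_antilipschitzWith_of_lipschitzWith {α β : Type*} [MetricSpace α]
    [CompleteSpace α] [Nonempty α] [MetricSpace β] {K L : ℝ≥0} {φ ψ : α → β}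
    (hφ : AntilipschitzWith K φ) (hφ_surj : Function.Surjective φ) (hψ : LipschitzWith L ψ)
    (hKL : K * L < 1) : ∃! x, φ x = ψ x := by
  set φinv := Function.surjInv hφ_surj
  have hφinv : Function.RightInverse φinv φ := Function.rightInverse_surjInv hφ_surj
  have hf : ContractingWith (K * L) (φinv ∘ ψ) := ⟨hKL, (hφ.to_rightInverse hφinv).comp hψ⟩
  have hfix : ∀ x, Function.IsFixedPt (φinv ∘ ψ) x ↔ φ x = ψ x := fun x =>
    ⟨fun h => (congrArg φ h).symm.trans (hφinv (ψ x)),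
      fun h => hφ.injective (by rw [Function.comp_apply, hφinv, h])⟩
  exact ⟨hf.fixedPoint, (hfix _).1 hf.fixedPoint_isFixedPt,
    fun y hy => hf.fixedPoint_unique ((hfix y).2 hy)⟩

theorem dist_vabs_vabs_le {n : ℕ} (u w : EuclideanSpace ℝ (Fin n)) :
    dist (vabs u) (vabs w) ≤ dist u w := by
  rw [EuclideanSpace.dist_eq, EuclideanSpace.dist_eq]
  gcongr with i
  simp only [vabs, PiLp.toLp_apply, Real.dist_eq]
  exact abs_abs_sub_abs_le_abs_sub _ _

theorem lipschitzWith_neg_add_vabs_mApp_add {n : ℕ} (B : Matrix (Fin n) (Fin n) ℝ)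
    (b₀ b₁ : EuclideanSpace ℝ (Fin n)) :
    LipschitzWith ‖Matrix.toEuclideanCLM (𝕜 := ℝ) B‖₊ fun x => -(b₀ + vabs (mApp B x + b₁)) := by
  refine LipschitzWith.of_dist_le_mul fun x y => ?_
  rw [dist_neg_neg, dist_add_left]
  calc dist (vabs (mApp B x + b₁)) (vabs (mApp B y + b₁))
      ≤ dist (mApp B x + b₁) (mApp B y + b₁) := dist_vabs_vabs_le _ _
    _ = dist (mApp B x) (mApp B y) := dist_add_right _ _ _
    _ ≤ _ := (Matrix.toEuclideanCLM (𝕜 := ℝ) B).lipschitz.dist_le_mul x y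

theorem sigmaMin_mul_norm_le {n : ℕ} (B : Matrix (Fin n) (Fin n) ℝ) (v : EuclideanSpace ℝ (Fin n)) :
    sigmaMin B * ‖v‖ ≤ ‖mApp B v‖ := by
  rcases eq_or_ne v 0 with rfl | hv
  · simp [mApp]
  have hbdd : BddBelow {r : ℝ | ∃ w : EuclideanSpace ℝ (Fin n), ‖w‖ = 1 ∧ r = ‖mApp B w‖} :=
    ⟨0, by rintro r ⟨w, -, rfl⟩; positivity⟩
  have hunit : sigmaMin B ≤ ‖mApp B (‖v‖⁻¹ • v)‖ := csInf_le hbdd ⟨_, norm_smul_inv_norm hv, rfl⟩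
  rwa [mApp, map_smul, norm_smul, norm_inv, norm_norm, ← div_eq_inv_mul,
    le_div_iff₀ (norm_pos_iff.2 hv)] at hunit

theorem antilipschitzWith_mApp {n : ℕ} {B : Matrix (Fin n) (Fin n) ℝ} (hB : 0 < sigmaMin B) :
    AntilipschitzWith (Real.toNNReal (sigmaMin B)⁻¹) (mApp B) :=
  (Matrix.toEuclideanCLM (𝕜 := ℝ) B).antilipschitz_of_bound fun v => by
    rw [Real.coe_toNNReal _ (by positivity), inv_mul_eq_div, le_div_iff₀ hB, mul_comm]
    exact sigmaMin_mul_norm_le B v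

theorem mApp_surjective {n : ℕ} {B : Matrix (Fin n) (Fin n) ℝ} (hB : 0 < sigmaMin B) :
    Function.Surjective (mApp B) :=
  LinearMap.injective_iff_surjective (f := (Matrix.toEuclideanCLM (𝕜 := ℝ) B).toLinearMap).1
    (antilipschitzWith_mApp hB).injective

theorem stmt_6 {n : ℕ} (B₀ B₁ : Matrix (Fin n) (Fin n) ℝ)
    (hσ : sigmaMin B₀ > specNorm B₁) :
    ∀ b₀ b₁ : EuclideanSpace ℝ (Fin n), ∃! x : EuclideanSpace ℝ (Fin n),
      mApp B₀ x + b₀ + vabs (mApp B₁ x + b₁) = 0 := by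
  intro b₀ b₁
  have hσ₀ : 0 < sigmaMin B₀ := (norm_nonneg _).trans_lt hσ
  have hKL : Real.toNNReal (sigmaMin B₀)⁻¹ * ‖Matrix.toEuclideanCLM (𝕜 := ℝ) B₁‖₊ < 1 := by
    rw [← NNReal.coe_lt_coe, NNReal.coe_mul, Real.coe_toNNReal _ (by positivity), coe_nnnorm,
      NNReal.coe_one, inv_mul_lt_one₀ hσ₀]
    exact hσ
  simpa only [eq_neg_iff_add_eq_zero, add_assoc] using
    existsUnique_eq_of_antilipschitzWith_of_lipschitzWith (antilipschitzWith_mApp hσ₀)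
      (mApp_surjective hσ₀) (lipschitzWith_neg_add_vabs_mApp_add B₁ b₀ b₁) hKL
end

section
/- Let Ω ∈ ℝ^{n×n} be a positive diagonal matrix and A₀, A₁, A₂ ∈ ℝ^{n×n}, q₀, q₁, q₂ ∈ ℝⁿ. Then x ∈ ℝⁿ satisfies min{A₀x + q₀, A₁x + q₁, A₂x + q₂} = 0 (componentwise minimum) if and only if (2ΩA₀ + A₁ + A₂)x − |(A₁ − A₂)x + q₁ − q₂| − |(2ΩA₀ − A₁ − A₂)x + |(A₁ − A₂)x + q₁ − q₂| + 2Ωq₀ − q₁ − q₂| + 2Ωq₀ + q₁ + q₂ = 0. -/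
/-!
Componentwise, `a + b - |a - b| = 2 * min a b` applied twice turns the `i`-th entry of the
right-hand side into `4 * min (ω * a) (min b c)` with `ω = Ω i i` and `a`, `b`, `c` the `i`-th
entries of `A₀ x + q₀`, `A₁ x + q₁`, `A₂ x + q₂`. As `ω > 0`, the complementarity description
`min u v = 0 ↔ 0 ≤ u ∧ 0 ≤ v ∧ u * v = 0` shows this vanishes exactly when `min a (min b c)` does.
-/

section Scalar

variable {α : Type*} [CommRing α] [LinearOrder α] [IsStrictOrderedRing α]

theorem add_sub_abs_sub_eq_two_mul_min (a b : α) : a + b - |a - b| = 2 * min a b := by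
  rw [abs_sub_comm, ← max_sub_min_eq_abs, ← min_add_max]
  ring

theorem min_eq_zero_iff (a b : α) :
    min a b = 0 ↔ 0 ≤ a ∧ 0 ≤ b ∧ a * b = 0 := by
  rcases le_total a b with h | h
  · rw [min_eq_left h]
    constructor
    · rintro rfl; exact ⟨le_rfl, h, zero_mul b⟩
    · rintro ⟨ha, hb, hab⟩
      rcases mul_eq_zero.mp hab with rfl | rfl
      · rfl
      · exact le_antisymm h ha
  · rw [min_eq_right h]
    constructor
    · rintro rfl; exact ⟨h, le_rfl, mul_zero a⟩
    · rintro ⟨ha, hb, hab⟩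
      rcases mul_eq_zero.mp hab with rfl | rfl
      · exact le_antisymm h hb
      · rfl

theorem min_mul_left_eq_zero_iff {ω : α} (hω : 0 < ω) (a b : α) :
    min (ω * a) b = 0 ↔ min a b = 0 := by
  simp only [min_eq_zero_iff, mul_nonneg_iff_of_pos_left hω, mul_assoc,
    mul_eq_zero, hω.ne', false_or]

theorem min_min_eq_zero_iff_abs {ω : α} (hω : 0 < ω) (a b c : α) :
    min a (min b c) = 0 ↔
      2 * ω * a + b + c - |b - c| - |2 * ω * a - b - c + (|b - c|)| = 0 := by
  have hbc : 2 * ω * a - b - c + |b - c| = 2 * (ω * a) - 2 * min b c := by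
    linarith [add_sub_abs_sub_eq_two_mul_min b c]
  have key : 2 * ω * a + b + c - |b - c| - |2 * ω * a - b - c + (|b - c|)| =
      4 * min (ω * a) (min b c) := by
    rw [hbc, ← mul_sub, abs_mul, abs_two]
    linarith [add_sub_abs_sub_eq_two_mul_min b c,
      add_sub_abs_sub_eq_two_mul_min (ω * a) (min b c)]
  rw [key, mul_eq_zero, or_iff_right four_ne_zero, min_mul_left_eq_zero_iff hω]

end Scalar

section MatrixAction

variable {n : ℕ}

theorem mApp_add (B C : Matrix (Fin n) (Fin n) ℝ) (x : EuclideanSpace ℝ (Fin n)) :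
    mApp (B + C) x = mApp B x + mApp C x := by
  simp [mApp]

theorem mApp_sub (B C : Matrix (Fin n) (Fin n) ℝ) (x : EuclideanSpace ℝ (Fin n)) :
    mApp (B - C) x = mApp B x - mApp C x := by
  simp [mApp]

theorem mApp_smul (r : ℝ) (B : Matrix (Fin n) (Fin n) ℝ) (x : EuclideanSpace ℝ (Fin n)) :
    mApp (r • B) x = r • mApp B x := by
  simp [mApp]

theorem mApp_mul (B C : Matrix (Fin n) (Fin n) ℝ) (x : EuclideanSpace ℝ (Fin n)) :
    mApp (B * C) x = mApp B (mApp C x) := by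
  simp [mApp]

theorem mApp_apply_of_isDiag {Ω : Matrix (Fin n) (Fin n) ℝ} (hΩ : Ω.IsDiag)
    (x : EuclideanSpace ℝ (Fin n)) (i : Fin n) : mApp Ω x i = Ω i i * x i := by
  rw [mApp, Matrix.ofLp_toEuclideanCLM, ← hΩ.diagonal_diag,
    Matrix.mulVec_diagonal]
  simp

end MatrixAction

theorem stmt_12 {n : ℕ} (Ω A₀ A₁ A₂ : Matrix (Fin n) (Fin n) ℝ)
    (hdiag : Ω.IsDiag) (hpos : ∀ i, 0 < Ω i i)
    (q₀ q₁ q₂ : EuclideanSpace ℝ (Fin n)) (x : EuclideanSpace ℝ (Fin n)) :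
    (∀ i, min ((mApp A₀ x + q₀) i)
        (min ((mApp A₁ x + q₁) i) ((mApp A₂ x + q₂) i)) = 0) ↔
      mApp ((2 : ℝ) • (Ω * A₀) + A₁ + A₂) x
          - vabs (mApp (A₁ - A₂) x + (q₁ - q₂))
          - vabs (mApp ((2 : ℝ) • (Ω * A₀) - A₁ - A₂) x
              + vabs (mApp (A₁ - A₂) x + (q₁ - q₂))
              + ((2 : ℝ) • mApp Ω q₀ - q₁ - q₂))
          + ((2 : ℝ) • mApp Ω q₀ + q₁ + q₂) = 0 := by
  rw [PiLp.ext_iff]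
  refine forall_congr' fun i => ?_
  rw [min_min_eq_zero_iff_abs (hpos i)]
  simp only [mApp_add, mApp_sub, mApp_smul, mApp_mul, vabs, PiLp.add_apply,
    PiLp.sub_apply, PiLp.smul_apply, PiLp.zero_apply, smul_eq_mul,
    mApp_apply_of_isDiag hdiag]
  ring_nf
end

section
/- Let g : ℝⁿ → ℝⁿ be continuous with unique zero x*, and suppose V(x) = ½‖x − x*‖² satisfies dV(x(t))/dt ≤ −c₁ V(x(t))^{κ₁} − c₂ V(x(t))^{κ₂} along every solution x(t) of dx/dt = −ρ(x)g(x), where c₁, c₂ > 0, 0 < κ₁ < 1 < κ₂. Then every solution reaches x* in time at most T_max = 1/(c₁(1−κ₁)) + 1/(c₂(κ₂−1)), independently of the initial condition. -/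
/-!
Both terms of the bound are handled by separation of variables. While `V > 1`, the `κ₂` term
alone makes `V ^ (1 - κ₂)` grow at rate at least `c₂ (κ₂ - 1)`, so `V ≤ 1` by time
`1 / (c₂ (κ₂ - 1))` whatever `V 0` is. From then on the `κ₁` term makes `V ^ (1 - κ₁) ≤ 1`
shrink at rate at least `c₁ (1 - κ₁)`, so `V` vanishes within a further `1 / (c₁ (1 - κ₁))`,
and being nonincreasing it stays zero.
-/

open Set

lemma antitoneOn_of_hasDerivAt_nonpos {D : Set ℝ} (hD : Convex ℝ D) {f f' : ℝ → ℝ}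
    (hf : ∀ t ∈ D, HasDerivAt f (f' t) t) (hf' : ∀ t ∈ D, f' t ≤ 0) : AntitoneOn f D :=
  antitoneOn_of_hasDerivWithinAt_nonpos hD
    (fun t ht ↦ (hf t ht).continuousAt.continuousWithinAt)
    (fun t ht ↦ (hf t (interior_subset ht)).hasDerivWithinAt)
    (fun t ht ↦ hf' t (interior_subset ht))

section PowerComparison

variable {v v' : ℝ → ℝ} {a b c κ : ℝ}

/-- `v ^ (1 - κ) / (1 - κ) + c t` is a first integral of `v' = -c v ^ κ`. -/
lemma antitoneOn_rpow_div_add_mul (hκ : κ ≠ 1) (hv : ∀ t ∈ Icc a b, HasDerivAt v (v' t) t)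
    (hpos : ∀ t ∈ Icc a b, 0 < v t) (hv' : ∀ t ∈ Icc a b, v' t ≤ -c * v t ^ κ) :
    AntitoneOn (fun t ↦ v t ^ (1 - κ) / (1 - κ) + c * t) (Icc a b) := by
  refine antitoneOn_of_hasDerivAt_nonpos (convex_Icc a b) (fun t ht ↦
    (((hv t ht).rpow_const (Or.inl (hpos t ht).ne')).div_const _).add
      ((hasDerivAt_id t).const_mul c)) fun t ht ↦ ?_
  have hcancel : v t ^ κ * v t ^ (-κ) = 1 := by
    rw [← Real.rpow_add (hpos t ht), add_neg_cancel, Real.rpow_zero]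
  calc v' t * (1 - κ) * v t ^ (1 - κ - 1) / (1 - κ) + c * 1
      = v' t * v t ^ (-κ) + c := by rw [sub_sub_cancel_left]; field_simp
    _ ≤ -c * v t ^ κ * v t ^ (-κ) + c := by
        gcongr
        exacts [Real.rpow_nonneg (hpos t ht).le _, hv' t ht]
    _ = 0 := by rw [mul_assoc, hcancel]; ring

lemma le_one_of_deriv_le_neg_rpow (hκ : 1 < κ) (hab : a ≤ b) (hT : 1 ≤ c * (κ - 1) * (b - a))
    (hv : ∀ t ∈ Icc a b, HasDerivAt v (v' t) t) (hanti : AntitoneOn v (Icc a b))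
    (hv' : ∀ t ∈ Icc a b, v' t ≤ -c * v t ^ κ) : v b ≤ 1 := by
  by_contra! hb
  have hpos : ∀ t ∈ Icc a b, 0 < v t := fun t ht ↦
    one_pos.trans (hb.trans_le (hanti ht (right_mem_Icc.2 hab) ht.2))
  have hw := antitoneOn_rpow_div_add_mul hκ.ne' hv hpos hv' (left_mem_Icc.2 hab)
    (right_mem_Icc.2 hab) hab
  have hκ' : 1 - κ < 0 := by linarith
  have hgrow : v a ^ (1 - κ) + c * (κ - 1) * (b - a) ≤ v b ^ (1 - κ) := by
    have := mul_le_mul_of_nonpos_left hw hκ'.le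
    simp only [mul_add, mul_div_cancel₀ _ hκ'.ne] at this
    linarith
  have ha : 0 < v a ^ (1 - κ) := Real.rpow_pos_of_pos (hpos a (left_mem_Icc.2 hab)) _
  have hb' : v b ^ (1 - κ) < 1 := Real.rpow_lt_one_of_one_lt_of_neg hb hκ'
  linarith

lemma eq_zero_of_deriv_le_neg_rpow (hκ : κ < 1) (hab : a ≤ b)
    (hT : v a ^ (1 - κ) ≤ c * (1 - κ) * (b - a))
    (hv : ∀ t ∈ Icc a b, HasDerivAt v (v' t) t) (hanti : AntitoneOn v (Icc a b))
    (hnonneg : 0 ≤ v b) (hv' : ∀ t ∈ Icc a b, v' t ≤ -c * v t ^ κ) : v b = 0 := by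
  by_contra hb
  have hb : 0 < v b := hnonneg.lt_of_ne' hb
  have hpos : ∀ t ∈ Icc a b, 0 < v t := fun t ht ↦
    hb.trans_le (hanti ht (right_mem_Icc.2 hab) ht.2)
  have hw := antitoneOn_rpow_div_add_mul hκ.ne hv hpos hv' (left_mem_Icc.2 hab)
    (right_mem_Icc.2 hab) hab
  have hdecay : v b ^ (1 - κ) + c * (1 - κ) * (b - a) ≤ v a ^ (1 - κ) := by
    have := mul_le_mul_of_nonneg_left hw (sub_pos.2 hκ).le
    simp only [mul_add, mul_div_cancel₀ _ (sub_pos.2 hκ).ne'] at this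
    linarith
  have hb' : 0 < v b ^ (1 - κ) := Real.rpow_pos_of_pos hb _
  linarith

end PowerComparison

theorem eq_zero_of_deriv_le_neg_rpow_sub_rpow {v v' : ℝ → ℝ} {c₁ c₂ κ₁ κ₂ : ℝ}
    (hc₁ : 0 < c₁) (hc₂ : 0 < c₂) (hκ₁ : κ₁ < 1) (hκ₂ : 1 < κ₂)
    (hnonneg : ∀ t, 0 ≤ t → 0 ≤ v t) (hv : ∀ t, 0 ≤ t → HasDerivAt v (v' t) t)
    (hv' : ∀ t, 0 ≤ t → v' t ≤ -c₁ * v t ^ κ₁ - c₂ * v t ^ κ₂) :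
    ∀ t, 1 / (c₁ * (1 - κ₁)) + 1 / (c₂ * (κ₂ - 1)) ≤ t → v t = 0 := by
  set T₁ := 1 / (c₂ * (κ₂ - 1))
  set T₂ := 1 / (c₁ * (1 - κ₁))
  have hk₁ : 0 < c₁ * (1 - κ₁) := mul_pos hc₁ (sub_pos.2 hκ₁)
  have hk₂ : 0 < c₂ * (κ₂ - 1) := mul_pos hc₂ (sub_pos.2 hκ₂)
  have hT₁ : 0 < T₁ := one_div_pos.2 hk₂
  have hT₂ : 0 < T₂ := one_div_pos.2 hk₁
  have hterm₁ : ∀ t, 0 ≤ t → v' t ≤ -c₁ * v t ^ κ₁ := fun t ht ↦ by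
    nlinarith [hv' t ht, Real.rpow_nonneg (hnonneg t ht) κ₂]
  have hterm₂ : ∀ t, 0 ≤ t → v' t ≤ -c₂ * v t ^ κ₂ := fun t ht ↦ by
    nlinarith [hv' t ht, Real.rpow_nonneg (hnonneg t ht) κ₁]
  have hanti : AntitoneOn v (Ici 0) := antitoneOn_of_hasDerivAt_nonpos (convex_Ici 0) hv
    fun t ht ↦ (hterm₁ t ht).trans <| by nlinarith [Real.rpow_nonneg (hnonneg t ht) κ₁]
  have hIcc : ∀ {a b : ℝ}, 0 ≤ a → Icc a b ⊆ Ici 0 := fun ha _ ht ↦ ha.trans ht.1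
  have hv₁ : v T₁ ≤ 1 :=
    le_one_of_deriv_le_neg_rpow hκ₂ hT₁.le (by rw [sub_zero, mul_one_div_cancel hk₂.ne'])
      (fun t ht ↦ hv t ht.1) (hanti.mono (hIcc le_rfl)) (fun t ht ↦ hterm₂ t ht.1)
  have hv₂ : v (T₁ + T₂) = 0 := by
    refine eq_zero_of_deriv_le_neg_rpow hκ₁ (by linarith) ?_
      (fun t ht ↦ hv t (hT₁.le.trans ht.1)) (hanti.mono (hIcc hT₁.le))
      (hnonneg _ (by positivity)) (fun t ht ↦ hterm₁ t (hT₁.le.trans ht.1))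
    calc v T₁ ^ (1 - κ₁) ≤ 1 := Real.rpow_le_one (hnonneg _ hT₁.le) hv₁ (sub_pos.2 hκ₁).le
      _ = c₁ * (1 - κ₁) * (T₁ + T₂ - T₁) := by rw [add_sub_cancel_left, mul_one_div_cancel hk₁.ne']
  intro t ht
  exact le_antisymm (hv₂ ▸ hanti (by positivity : (0:ℝ) ≤ T₁ + T₂) (mem_Ici.2 (by linarith))
    (by linarith)) (hnonneg t (by linarith))

theorem stmt_15_general {n : ℕ} (g : EuclideanSpace ℝ (Fin n) → EuclideanSpace ℝ (Fin n))
    (xs : EuclideanSpace ℝ (Fin n))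
    (ρ : EuclideanSpace ℝ (Fin n) → ℝ)
    (c₁ c₂ κ₁ κ₂ : ℝ) (hc₁ : 0 < c₁) (hc₂ : 0 < c₂)
    (hκ₁' : κ₁ < 1) (hκ₂ : 1 < κ₂)
    (x : ℝ → EuclideanSpace ℝ (Fin n))
    (hode : ∀ t : ℝ, 0 ≤ t → HasDerivAt x (-(ρ (x t)) • g (x t)) t)
    (hV : ∀ t : ℝ, 0 ≤ t →
      deriv (fun s => (1 / 2) * ‖x s - xs‖ ^ 2) t ≤
        -c₁ * ((1 / 2) * ‖x t - xs‖ ^ 2) ^ κ₁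
          - c₂ * ((1 / 2) * ‖x t - xs‖ ^ 2) ^ κ₂) :
    ∀ t : ℝ, 1 / (c₁ * (1 - κ₁)) + 1 / (c₂ * (κ₂ - 1)) ≤ t → x t = xs := by
  intro t ht
  have hdiff : ∀ s, 0 ≤ s → HasDerivAt (fun r => (1 / 2) * ‖x r - xs‖ ^ 2)
      (deriv (fun r => (1 / 2) * ‖x r - xs‖ ^ 2) s) s := fun s hs ↦
    ((((hode s hs).differentiableAt.sub_const xs).norm_sq ℝ).const_mul _).hasDerivAt
  have hV₀ := eq_zero_of_deriv_le_neg_rpow_sub_rpow hc₁ hc₂ hκ₁' hκ₂ (fun _ _ ↦ by positivity)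
    hdiff hV t ht
  simpa [sub_eq_zero] using hV₀

theorem stmt_15 {n : ℕ} (g : EuclideanSpace ℝ (Fin n) → EuclideanSpace ℝ (Fin n))
    (hg : Continuous g) (xs : EuclideanSpace ℝ (Fin n))
    (hzero : ∀ x, g x = 0 ↔ x = xs)
    (ρ : EuclideanSpace ℝ (Fin n) → ℝ)
    (c₁ c₂ κ₁ κ₂ : ℝ) (hc₁ : 0 < c₁) (hc₂ : 0 < c₂)
    (hκ₁ : 0 < κ₁) (hκ₁' : κ₁ < 1) (hκ₂ : 1 < κ₂)
    (x : ℝ → EuclideanSpace ℝ (Fin n))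
    (hode : ∀ t : ℝ, 0 ≤ t → HasDerivAt x (-(ρ (x t)) • g (x t)) t)
    (hV : ∀ t : ℝ, 0 ≤ t →
      deriv (fun s => (1 / 2) * ‖x s - xs‖ ^ 2) t ≤
        -c₁ * ((1 / 2) * ‖x t - xs‖ ^ 2) ^ κ₁
          - c₂ * ((1 / 2) * ‖x t - xs‖ ^ 2) ^ κ₂) :
    ∀ t : ℝ, 1 / (c₁ * (1 - κ₁)) + 1 / (c₂ * (κ₂ - 1)) ≤ t → x t = xs :=
  stmt_15_general g xs ρ c₁ c₂ κ₁ κ₂ hc₁ hc₂ hκ₁' hκ₂ x hode hV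
end

section
/- Scalar settling-time bound: let v : [0, ∞) → ℝ be nonnegative, differentiable, with v′(t) ≤ −c₁ v(t)^{κ₁} whenever v(t) ≤ 1 and v′(t) ≤ −c₂ v(t)^{κ₂} whenever v(t) ≥ 1, where c₁, c₂ > 0, 0 < κ₁ < 1 < κ₂. Then v(t) = 0 for all t ≥ 1/(c₁(1−κ₁)) + 1/(c₂(κ₂−1)). -/
/-!
With `w = v ^ (1 - κ) / (1 - κ)` the inequality `v' ≤ -c v ^ κ` becomes `w' ≤ -c`, so `w` decreases
at least linearly. In the regime `v ≥ 1` (with `κ₂ > 1`) this caps the time spent above `1` by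
`1 / (c₂ (κ₂ - 1))`, since `v ^ (1 - κ₂)` lies in `(0, 1)` there; afterwards `v ≤ 1` for good, and
in the regime `v ≤ 1` (with `κ₁ < 1`) the quantity `v ^ (1 - κ₁) ∈ [0, 1]` must reach `0` within
time `1 / (c₁ (1 - κ₁))`.
-/

open Set

section SettlingTime

variable {v : ℝ → ℝ} {a b c κ : ℝ}

theorem antitoneOn_rpow_div_add_mul_of_deriv_le {s : Set ℝ} (hκ : κ ≠ 1) (hs : Convex ℝ s)
    (hpos : ∀ t ∈ s, 0 < v t) (hdiff : ∀ t ∈ s, DifferentiableAt ℝ v t)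
    (hderiv : ∀ t ∈ interior s, deriv v t ≤ -c * v t ^ κ) :
    AntitoneOn (fun t => v t ^ (1 - κ) / (1 - κ) + c * t) s := by
  have hκ' : 1 - κ ≠ 0 := sub_ne_zero.mpr hκ.symm
  have hasDeriv : ∀ t ∈ s, HasDerivAt (fun t => v t ^ (1 - κ) / (1 - κ) + c * t)
      (deriv v t * v t ^ (-κ) + c) t := by
    intro t ht
    refine ((((hdiff t ht).hasDerivAt.rpow_const (p := 1 - κ) (Or.inl (hpos t ht).ne')).div_const
      (1 - κ)).add ((hasDerivAt_id t).const_mul c)).congr_deriv ?_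
    rw [show 1 - κ - 1 = -κ by ring]
    field_simp
  refine antitoneOn_of_deriv_nonpos hs
    (fun t ht => (hasDeriv t ht).continuousAt.continuousWithinAt)
    (fun t ht => (hasDeriv t (interior_subset ht)).differentiableAt.differentiableWithinAt)
    fun t ht => ?_
  have hvt := hpos t (interior_subset ht)
  rw [(hasDeriv t (interior_subset ht)).deriv]
  calc deriv v t * v t ^ (-κ) + c ≤ -c * v t ^ κ * v t ^ (-κ) + c := by
        gcongr
        exact hderiv t ht
    _ = 0 := by rw [mul_assoc, ← Real.rpow_add hvt]; simp

theorem mul_sub_le_rpow_sub_rpow_div_of_deriv_le (hκ : κ ≠ 1) (hab : a ≤ b)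
    (hpos : ∀ t ∈ Icc a b, 0 < v t) (hdiff : ∀ t ∈ Icc a b, DifferentiableAt ℝ v t)
    (hderiv : ∀ t ∈ Icc a b, deriv v t ≤ -c * v t ^ κ) :
    c * (b - a) ≤ (v a ^ (1 - κ) - v b ^ (1 - κ)) / (1 - κ) := by
  have h := antitoneOn_rpow_div_add_mul_of_deriv_le hκ (convex_Icc a b) hpos hdiff
    (fun t ht => hderiv t (interior_subset ht)) (left_mem_Icc.mpr hab) (right_mem_Icc.mpr hab) hab
  simp only at h
  rw [sub_div]
  linarith

theorem le_one_of_deriv_le_neg_mul_rpow (hc : 0 < c) (hκ : 1 < κ)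
    (hab : 1 / (c * (κ - 1)) ≤ b - a) (hanti : AntitoneOn v (Icc a b))
    (hdiff : ∀ t ∈ Icc a b, DifferentiableAt ℝ v t)
    (hderiv : ∀ t ∈ Icc a b, 1 ≤ v t → deriv v t ≤ -c * v t ^ κ) :
    v b ≤ 1 := by
  by_contra! hvb
  have hab' : a ≤ b := by linarith [one_div_pos.mpr (mul_pos hc (sub_pos.mpr hκ))]
  have hgt : ∀ t ∈ Icc a b, 1 < v t := fun t ht =>
    hvb.trans_le (hanti ht (right_mem_Icc.mpr hab') ht.2)
  have key := mul_sub_le_rpow_sub_rpow_div_of_deriv_le hκ.ne' hab'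
    (fun t ht => one_pos.trans (hgt t ht)) hdiff (fun t ht => hderiv t ht (hgt t ht).le)
  have hva_pow : 0 < v a ^ (1 - κ) :=
    Real.rpow_pos_of_pos (one_pos.trans (hgt a (left_mem_Icc.mpr hab'))) _
  have hvb_pow : v b ^ (1 - κ) < 1 := Real.rpow_lt_one_of_one_lt_of_neg hvb (by linarith)
  rw [le_div_iff_of_neg (by linarith)] at key
  rw [div_le_iff₀ (mul_pos hc (sub_pos.mpr hκ))] at hab
  nlinarith

theorem eq_zero_of_deriv_le_neg_mul_rpow (hc : 0 < c) (hκ : κ < 1)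
    (hab : 1 / (c * (1 - κ)) ≤ b - a) (hanti : AntitoneOn v (Icc a b)) (hva : v a ≤ 1)
    (hvb : 0 ≤ v b) (hdiff : ∀ t ∈ Icc a b, DifferentiableAt ℝ v t)
    (hderiv : ∀ t ∈ Icc a b, v t ≤ 1 → deriv v t ≤ -c * v t ^ κ) :
    v b = 0 := by
  by_contra hne
  have hvb_pos : 0 < v b := hvb.lt_of_ne' hne
  have hab' : a ≤ b := by linarith [one_div_pos.mpr (mul_pos hc (sub_pos.mpr hκ))]
  have hpos : ∀ t ∈ Icc a b, 0 < v t := fun t ht =>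
    hvb_pos.trans_le (hanti ht (right_mem_Icc.mpr hab') ht.2)
  have hle : ∀ t ∈ Icc a b, v t ≤ 1 := fun t ht =>
    (hanti (left_mem_Icc.mpr hab') ht ht.1).trans hva
  have key := mul_sub_le_rpow_sub_rpow_div_of_deriv_le hκ.ne hab' hpos hdiff
    (fun t ht => hderiv t ht (hle t ht))
  have hva_pow : v a ^ (1 - κ) ≤ 1 :=
    Real.rpow_le_one (hpos a (left_mem_Icc.mpr hab')).le hva (by linarith)
  have hvb_pow : 0 < v b ^ (1 - κ) := Real.rpow_pos_of_pos hvb_pos _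
  rw [le_div_iff₀ (by linarith)] at key
  rw [div_le_iff₀ (mul_pos hc (sub_pos.mpr hκ))] at hab
  nlinarith

end SettlingTime

theorem stmt_16_general (v : ℝ → ℝ) (c₁ c₂ κ₁ κ₂ : ℝ)
    (hc₁ : 0 < c₁) (hc₂ : 0 < c₂) (hκ₁' : κ₁ < 1) (hκ₂ : 1 < κ₂)
    (hnn : ∀ t : ℝ, 0 ≤ t → 0 ≤ v t)
    (hdiff : ∀ t : ℝ, 0 ≤ t → DifferentiableAt ℝ v t)
    (h₁ : ∀ t : ℝ, 0 ≤ t → v t ≤ 1 → deriv v t ≤ -c₁ * v t ^ κ₁)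
    (h₂ : ∀ t : ℝ, 0 ≤ t → 1 ≤ v t → deriv v t ≤ -c₂ * v t ^ κ₂) :
    ∀ t : ℝ, 1 / (c₁ * (1 - κ₁)) + 1 / (c₂ * (κ₂ - 1)) ≤ t → v t = 0 := by
  intro t ht
  set T₂ := 1 / (c₂ * (κ₂ - 1))
  have hT₁ : 0 < 1 / (c₁ * (1 - κ₁)) := one_div_pos.mpr (mul_pos hc₁ (sub_pos.mpr hκ₁'))
  have hT₂ : 0 < T₂ := one_div_pos.mpr (mul_pos hc₂ (sub_pos.mpr hκ₂))
  have hanti : AntitoneOn v (Ici 0) := by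
    refine antitoneOn_of_deriv_nonpos (convex_Ici 0)
      (fun t ht => (hdiff t ht).continuousAt.continuousWithinAt)
      (fun t ht => (hdiff t (interior_subset ht)).differentiableWithinAt) fun t ht => ?_
    rw [interior_Ici] at ht
    have hv := hnn t ht.le
    rcases le_total (v t) 1 with hle | hge
    · nlinarith [h₁ t ht.le hle, Real.rpow_nonneg hv κ₁]
    · nlinarith [h₂ t ht.le hge, Real.rpow_nonneg hv κ₂]
  have hvT₂ : v T₂ ≤ 1 :=
    le_one_of_deriv_le_neg_mul_rpow hc₂ hκ₂ (sub_zero T₂).ge (hanti.mono Icc_subset_Ici_self)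
      (fun s hs => hdiff s hs.1) (fun s hs => h₂ s hs.1)
  exact eq_zero_of_deriv_le_neg_mul_rpow hc₁ hκ₁' (by linarith)
    (hanti.mono (Icc_subset_Ici_self.trans (Ici_subset_Ici.mpr hT₂.le)))
    hvT₂ (hnn t (by linarith)) (fun s hs => hdiff s (hT₂.le.trans hs.1))
    (fun s hs => h₁ s (hT₂.le.trans hs.1))

theorem stmt_16 (v : ℝ → ℝ) (c₁ c₂ κ₁ κ₂ : ℝ)
    (hc₁ : 0 < c₁) (hc₂ : 0 < c₂) (hκ₁ : 0 < κ₁) (hκ₁' : κ₁ < 1) (hκ₂ : 1 < κ₂)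
    (hnn : ∀ t : ℝ, 0 ≤ t → 0 ≤ v t)
    (hdiff : ∀ t : ℝ, 0 ≤ t → DifferentiableAt ℝ v t)
    (h₁ : ∀ t : ℝ, 0 ≤ t → v t ≤ 1 → deriv v t ≤ -c₁ * v t ^ κ₁)
    (h₂ : ∀ t : ℝ, 0 ≤ t → 1 ≤ v t → deriv v t ≤ -c₂ * v t ^ κ₂) :
    ∀ t : ℝ, 1 / (c₁ * (1 - κ₁)) + 1 / (c₂ * (κ₂ - 1)) ≤ t → v t = 0 :=
  stmt_16_general v c₁ c₂ κ₁ κ₂ hc₁ hc₂ hκ₁' hκ₂ hnn hdiff h₁ h₂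
end
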